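/- arXiv:2502.10212 — 2 statements merged into one kernel-verified Lean document; each statement's English description precedes it below -/
import Mathlib

section
/- Let (b_n) be any 0-1 sequence and (p_n) the increasing sequence of primes. Define a_n to be the unique integer in {1, ..., p_1^n ⋯ p_n^n} such that a_n ≡ b_k (mod p_k^n) for all k ≤ n. Then the sequence (a_n) is MC-finite; in particular, for every prime power p_i^j and all n ≥ max(i, j), a_n mod p_i^j = b_i. -/
/-- A sequence is eventually periodic if some positive shift eventually fixes it. -/
def EvPeriodic {α : Type*} (g : ℕ → α) : Prop :=
  ∃ N r : ℕ, 0 < r ∧ ∀ n, N ≤ n → g (n + r) = g n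

lemma nth_prime_ge (i : ℕ) : i + 2 ≤ Nat.nth Nat.Prime i := by
  induction i with
  | zero => simp [Nat.nth_count Nat.prime_two]  -- nth 0 = 2
  | succ k ih =>
    have h := Nat.nth_lt_nth (p := Nat.Prime) Nat.infinite_setOf_prime |>.2
      (show k < k + 1 by omega)
    omega

/-- Let `b` be a 0-1 sequence and `Nat.nth Nat.Prime` the increasing enumeration of
primes (`p_{k+1} = Nat.nth Nat.Prime k` in the 1-based notation of the paper).
If `a n` lies in `{1, …, p_1^n ⋯ p_n^n}` and `a n ≡ b k (mod p_k^n)` for all `k ≤ n`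
(here `k < n` in 0-based indexing), then `a` is MC-finite, and moreover
for every prime power `p_i^j` and all `n ≥ max(i, j)` we have `a n mod p_i^j = b i`. -/
theorem specker_sequence_MCFinite (b : ℕ → ℕ) (hb : ∀ n, b n ≤ 1)
    (a : ℕ → ℕ)
    (ha_lb : ∀ n, 1 ≤ a n)
    (ha_ub : ∀ n, a n ≤ ∏ k ∈ Finset.range n, (Nat.nth Nat.Prime k) ^ n)
    (ha_cong : ∀ n, ∀ k < n, a n % (Nat.nth Nat.Prime k) ^ n = b k) :
    (∀ m : ℕ, 0 < m → EvPeriodic (fun n => a n % m)) ∧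
    (∀ i j n : ℕ, 0 < j → i < n → j ≤ n →
      a n % (Nat.nth Nat.Prime i) ^ j = b i) := by
  have key : ∀ i j n : ℕ, 0 < j → i < n → j ≤ n →
      a n % (Nat.nth Nat.Prime i) ^ j = b i := by
    intro i j n hj hin hjn
    have hp : (Nat.nth Nat.Prime i).Prime :=
      Nat.nth_mem_of_infinite Nat.infinite_setOf_prime i
    have hdvd : (Nat.nth Nat.Prime i) ^ j ∣ (Nat.nth Nat.Prime i) ^ n :=
      pow_dvd_pow _ hjn
    have h1 : a n % (Nat.nth Nat.Prime i) ^ n % (Nat.nth Nat.Prime i) ^ j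
        = a n % (Nat.nth Nat.Prime i) ^ j := Nat.mod_mod_of_dvd _ hdvd
    rw [← h1, ha_cong n i hin]
    have : b i < (Nat.nth Nat.Prime i) ^ j := by
      have h2 : 2 ≤ Nat.nth Nat.Prime i := hp.two_le
      have : 2 ≤ (Nat.nth Nat.Prime i) ^ j :=
        le_trans h2 (Nat.le_self_pow hj.ne' _)
      have := hb i; omega
    exact Nat.mod_eq_of_lt this
  refine ⟨?_, key⟩
  intro m hm
  refine ⟨m, 1, one_pos, ?_⟩
  intro n hn
  simp only
  -- show a (n+1) ≡ a n [MOD m]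
  have hmod : a (n + 1) ≡ a n [MOD m] := by
    rw [Nat.modEq_iff_dvd]
    have habs : m ∣ ((a n : ℤ) - a (n + 1)).natAbs := by
      rw [Nat.dvd_iff_prime_pow_dvd_dvd]
      intro p k hp hpk
      rcases Nat.eq_zero_or_pos k with rfl | hk
      · simp
      have hpm : p ∣ m := dvd_trans (dvd_pow_self p hk.ne') hpk
      have hpkm : p ^ k ≤ m := Nat.le_of_dvd hm hpk
      set i := Nat.count Nat.Prime p with hi
      have hnth : Nat.nth Nat.Prime i = p := Nat.nth_count hp
      have hip : i + 2 ≤ p := hnth ▸ nth_prime_ge i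
      have hpm' : p ≤ m := Nat.le_of_dvd hm hpm
      have hkp : k < p ^ k := Nat.lt_pow_self hp.one_lt
      -- bounds: i < n, k ≤ n, i < n+1, k ≤ n+1
      have hin : i < n := by omega
      have hkn : k ≤ n := by omega
      have e1 : a n % p ^ k = b i := by rw [← hnth]; exact key i k n hk hin hkn
      have e2 : a (n + 1) % p ^ k = b i := by
        rw [← hnth]; exact key i k (n + 1) hk (by omega) (by omega)
      have : a (n + 1) ≡ a n [MOD p ^ k] := e2.trans e1.symm
      rw [Nat.modEq_iff_dvd] at this
      have h3 : ((p ^ k : ℕ) : ℤ) ∣ ((↑(a n) - ↑(a (n + 1)) : ℤ).natAbs : ℤ) := by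
        exact Int.dvd_natAbs.mpr this
      exact_mod_cast h3
    exact Int.dvd_natAbs.mp (Int.natCast_dvd_natCast.mpr habs)
  exact hmod
end

section
/- Let G be a group acting on a set X and x ∈ X. If H ≤ G is a subgroup, then |Orb_G(x)| need not equal |Orb_H(x)|, but in the specific setting below divisibility holds: if A' ⊆ A, a structure 𝔄 on A has a vertex v ∈ A \ A' with exactly d neighbors in A' (in its Gaifman graph), and S_{A'} is the group of permutations of A fixing A \ A' pointwise, then |Orb_{S_{A'}}(𝔄)| is divisible by C(|A'|, d). -/
open Nat


/-- The action of a permutation `σ` of the universe `A` on a relational structure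
given by relations `R i ⊆ A^{ρ i}`: the relabelled structure. -/
def actStr {A : Type*} {ι : Type*} (ρ : ι → ℕ) (σ : Equiv.Perm A)
    (R : ∀ i, Set (Fin (ρ i) → A)) : ∀ i, Set (Fin (ρ i) → A) :=
  fun i => {t | (fun x => σ.symm (t x)) ∈ R i}

/-- Adjacency in the Gaifman graph of the structure `R`: two distinct elements
are adjacent iff they occur together in some tuple of some relation. -/
def gaifmanAdj {A : Type*} {ι : Type*} (ρ : ι → ℕ)
    (R : ∀ i, Set (Fin (ρ i) → A)) (u b : A) : Prop :=
  u ≠ b ∧ ∃ i, ∃ t ∈ R i, (∃ x, t x = u) ∧ (∃ x, t x = b)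

section Aux

variable {A : Type*} {ι : Type*}

/-- The (left) action of permutations on structures. -/
instance actStrMulAction (ρ : ι → ℕ) :
    MulAction (Equiv.Perm A) (∀ i, Set (Fin (ρ i) → A)) where
  smul σ R := actStr ρ σ R
  one_smul R := rfl
  mul_smul σ τ R := rfl

theorem actStr_smul_def (ρ : ι → ℕ) (σ : Equiv.Perm A) (R : ∀ i, Set (Fin (ρ i) → A)) :
    σ • R = actStr ρ σ R := rfl

/-- Relabelling preserves Gaifman adjacency. -/
theorem actStr_adj (ρ : ι → ℕ) (σ : Equiv.Perm A) (R : ∀ i, Set (Fin (ρ i) → A)) (u b : A) :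
    gaifmanAdj ρ (actStr ρ σ R) (σ u) (σ b) ↔ gaifmanAdj ρ R u b := by
  constructor
  · rintro ⟨hne, i, t, ht, ⟨x, hx⟩, ⟨y, hy⟩⟩
    refine ⟨fun h => hne (by rw [h]), i, fun z => σ.symm (t z), ht,
      ⟨x, by simp [hx]⟩, ⟨y, by simp [hy]⟩⟩
  · rintro ⟨hne, i, t, ht, ⟨x, hx⟩, ⟨y, hy⟩⟩
    refine ⟨fun h => hne (σ.injective h), i, fun z => σ (t z), ?_,
      ⟨x, by simp [hx]⟩, ⟨y, by simp [hy]⟩⟩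
    simpa [actStr] using ht

end Aux

/-- Orbit divisibility: if the structure `R` on the finite universe `A` has a
vertex `v ∉ A'` with exactly `d` Gaifman-neighbors in `A'`, then the size of the
orbit of `R` under the group `S_{A'}` of permutations fixing `A \ A'` pointwise
is divisible by the binomial coefficient `C(|A'|, d)`. -/
theorem orbit_card_divisible {A : Type*} [Fintype A] [DecidableEq A]
    {ι : Type*} [Fintype ι] (ρ : ι → ℕ)
    (R : ∀ i, Set (Fin (ρ i) → A)) (A' : Finset A) (v : A) (hv : v ∉ A') (d : ℕ)
    (hd : Set.ncard {b : A | b ∈ A' ∧ gaifmanAdj ρ R v b} = d) :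
    (A'.card).choose d ∣
      Set.ncard {R' : ∀ i, Set (Fin (ρ i) → A) |
        ∃ σ : Equiv.Perm A, (∀ a ∉ A', σ a = a) ∧ R' = actStr ρ σ R} := by
  classical
  set n := A'.card with hn
  -- The subgroup of permutations fixing the complement of `A'` pointwise.
  set H : Subgroup (Equiv.Perm A) :=
    { carrier := {σ | ∀ a ∉ A', σ a = a}
      one_mem' := fun a _ => rfl
      mul_mem' := fun {σ τ} hσ hτ a ha => by
        simp only [Equiv.Perm.coe_mul, Function.comp_apply, hτ a ha, hσ a ha]
      inv_mem' := fun {σ} hσ a ha =>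
        σ.injective (by rw [← Equiv.Perm.mul_apply, mul_inv_cancel, Equiv.Perm.one_apply, hσ a ha]) } with hH
  have hmemH : ∀ σ : Equiv.Perm A, σ ∈ H ↔ ∀ a ∉ A', σ a = a := fun σ => Iff.rfl
  -- Members of `H` permute `A'`.
  have hA' : ∀ σ ∈ H, ∀ b : A, b ∈ A' ↔ σ b ∈ A' := by
    intro σ hσ b
    constructor
    · intro hb
      by_contra h
      have h2 : σ (σ b) = σ b := (hmemH σ).mp hσ _ h
      have h3 : σ b = b := σ.injective h2
      rw [h3] at h
      exact h hb
    · intro hb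
      by_contra h
      rw [(hmemH σ).mp hσ b h] at hb
      exact h hb
  -- The orbit.
  have horb : {R' : ∀ i, Set (Fin (ρ i) → A) |
      ∃ σ : Equiv.Perm A, (∀ a ∉ A', σ a = a) ∧ R' = actStr ρ σ R}
      = MulAction.orbit H R := by
    ext R'
    constructor
    · rintro ⟨σ, hσ, rfl⟩
      exact ⟨⟨σ, hσ⟩, rfl⟩
    · rintro ⟨⟨σ, hσ⟩, rfl⟩
      exact ⟨σ, hσ, rfl⟩
  rw [horb, ← MulAction.index_stabilizer]
  set S := MulAction.stabilizer H R with hS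
  -- Cardinality of `H`.
  have hcardH : Nat.card H = n ! := by
    have e : H ≃ Equiv.Perm {a // a ∈ A'} :=
      (Equiv.subtypeEquivRight (fun σ => Iff.rfl)).trans
        (Equiv.Perm.subtypeEquivSubtypePerm (· ∈ A')).symm
    rw [Nat.card_congr e, Nat.card_eq_fintype_card, Fintype.card_perm, Fintype.card_coe]
  -- Stabilizer elements fix `v` and preserve the neighborhood of `v`.
  have hadj : ∀ σ : S, ∀ b : A,
      gaifmanAdj ρ R v b ↔ gaifmanAdj ρ R v ((σ : Equiv.Perm A) b) := by
    intro σ b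
    have h1 : actStr ρ ((σ : H) : Equiv.Perm A) R = R := σ.2
    have hv' : ((σ : H) : Equiv.Perm A) v = v := σ.1.2 v hv
    conv_rhs => rw [← hv', ← h1]
    exact (actStr_adj ρ _ R v b).symm
  -- predicates for neighbors and non-neighbors in `A'`
  set p : A → Prop := fun b => b ∈ A' ∧ gaifmanAdj ρ R v b with hp
  set q : A → Prop := fun b => b ∈ A' ∧ ¬ gaifmanAdj ρ R v b with hq
  have hip : ∀ σ : S, ∀ x, p x ↔ p ((σ : Equiv.Perm A) x) := by
    intro σ x
    exact and_congr (hA' _ σ.1.2 x) (hadj σ x)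
  have hiq : ∀ σ : S, ∀ x, q x ↔ q ((σ : Equiv.Perm A) x) := by
    intro σ x
    exact and_congr (hA' _ σ.1.2 x) (not_congr (hadj σ x))
  -- the restriction homomorphism
  let phi : S →* Equiv.Perm {x // p x} × Equiv.Perm {x // q x} :=
    { toFun := fun σ => (Equiv.Perm.subtypePerm (σ : Equiv.Perm A) (fun x => (hip σ x).symm),
        Equiv.Perm.subtypePerm (σ : Equiv.Perm A) (fun x => (hiq σ x).symm))
      map_one' := rfl
      map_mul' := fun σ τ => rfl }
  have hinj : Function.Injective phi := by
    rw [injective_iff_map_eq_one]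
    intro σ hσ1
    have h1 := congrArg Prod.fst hσ1
    have h2 := congrArg Prod.snd hσ1
    ext a
    show ((σ : H) : Equiv.Perm A) a = a
    by_cases ha : a ∈ A'
    · by_cases hadja : gaifmanAdj ρ R v a
      · have := congrArg (fun (f : Equiv.Perm {x // p x}) => (f ⟨a, ha, hadja⟩ : A)) h1
        exact this
      · have := congrArg (fun (f : Equiv.Perm {x // q x}) => (f ⟨a, ha, hadja⟩ : A)) h2
        exact this
    · exact σ.1.2 a ha
  -- cardinalities of the two pieces
  have hcardp : Nat.card {x // p x} = d := by
    rw [← hd]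
    exact Nat.card_coe_set_eq {b : A | b ∈ A' ∧ gaifmanAdj ρ R v b}
  have hNsub : {b : A | b ∈ A' ∧ gaifmanAdj ρ R v b} ⊆ (A' : Set A) := fun b hb => hb.1
  have hdn : d ≤ n := by
    rw [← hd, hn, ← Set.ncard_coe_finset A']
    exact Set.ncard_le_ncard hNsub (A' : Set A).toFinite
  have hcardq : Nat.card {x // q x} = n - d := by
    have hqset : {b : A | q b} = (A' : Set A) \ {b : A | b ∈ A' ∧ gaifmanAdj ρ R v b} := by
      ext b
      simp only [hq, Set.mem_setOf_eq, Set.mem_diff, Finset.mem_coe]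
      tauto
    have : Nat.card {x // q x} = ({b : A | q b}).ncard :=
      Nat.card_coe_set_eq {b : A | q b}
    rw [this, hqset, Set.ncard_diff hNsub, Set.ncard_coe_finset, hd]
  -- `|S|` divides `d! * (n-d)!`
  have hSdvd : Nat.card S ∣ d ! * (n - d)! := by
    have h := Subgroup.card_dvd_of_injective phi hinj
    have e1 : Nat.card (Equiv.Perm {x // p x}) = d ! := by
      rw [Nat.card_eq_fintype_card, Fintype.card_perm, ← Nat.card_eq_fintype_card, hcardp]
    have e2 : Nat.card (Equiv.Perm {x // q x}) = (n - d)! := by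
      rw [Nat.card_eq_fintype_card, Fintype.card_perm, ← Nat.card_eq_fintype_card, hcardq]
    rwa [Nat.card_prod, e1, e2] at h
  -- orbit-stabilizer
  have hos : S.index * Nat.card S = n ! := by
    rw [Subgroup.index_mul_card, hcardH]
  obtain ⟨k, hk⟩ := hSdvd
  have hpos : 0 < Nat.card S := by
    rcases Nat.eq_zero_or_pos (Nat.card S) with h | h
    · rw [h, mul_zero] at hos
      exact absurd hos.symm (Nat.factorial_pos n).ne'
    · exact h
  refine ⟨k, Nat.eq_of_mul_eq_mul_right hpos ?_⟩
  rw [hos, ← Nat.choose_mul_factorial_mul_factorial hdn]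
  rw [mul_assoc, hk]
  ring
end
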